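/- Let F be a homogeneous polynomial of degree 3 over ℂ in x_0, x_1, x_2, x_3 and let f_0 := x_4^3 − F(x_0,x_1,x_2,x_3) + x_5·(x_0·x_3 − x_1·x_2) (the case t = 0, the cuspidal cyclic cubic fourfold). A 2-dimensional linear subspace W ⊆ ℂ^6 with e_5 ∈ W satisfies f_0(v) = 0 for all v ∈ W if and only if there exists a nonzero u ∈ W with u_5 = 0, u_0·u_3 = u_1·u_2, u_4^3 = F(u_0,u_1,u_2,u_3), and W = span{e_5, u}. (Equivalently: the lines on Y_{F,0} through the cusp point p_0 are exactly the lines joining p_0 to a point of the K3 surface S ⊂ ℙ^4 defined by x_4^3 = F and x_0·x_3 = x_1·x_2.) -/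

import Mathlib

open MvPolynomial

/-!
On a plane through `e₅` spanned by `e₅` and a vector `u` with `u₅ = 0`, homogeneity of `F` gives
`f₀(a e₅ + b u) = b³ (u₄³ − F(u₀,…,u₃)) + a b² (u₀u₃ − u₁u₂)`, so `f₀` vanishes on the plane iff
both coefficients vanish. Every plane through `e₅` is of this form: subtract from any vector of
the plane outside `ℂ e₅` its `e₅`-component.
-/

/-- The cubic form `f₀ = x₄³ − F(x₀,x₁,x₂,x₃) + x₅(x₀x₃ − x₁x₂)` defining the
cuspidal cyclic cubic fourfold `Y_{F,0} ⊂ ℙ⁵`. -/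
noncomputable def f0Poly (F : MvPolynomial (Fin 4) ℂ) : MvPolynomial (Fin 6) ℂ :=
  X 4 ^ 3 - rename (Fin.castLE (by norm_num)) F
    + X 5 * (X 0 * X 3 - X 1 * X 2)

/-- The vector `e₅ = (0,0,0,0,0,1)`, representing the point `p₀ = [0:0:0:0:0:1]`. -/
def e5 : Fin 6 → ℂ := ![0, 0, 0, 0, 0, 1]

theorem MvPolynomial.IsHomogeneous.eval_smul {σ R : Type*} [CommSemiring R]
    {φ : MvPolynomial σ R} {n : ℕ} (hφ : φ.IsHomogeneous n) (c : R) (x : σ → R) :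
    eval (c • x) φ = c ^ n * eval x φ := by
  rw [eval_eq, eval_eq, Finset.mul_sum]
  refine Finset.sum_congr rfl fun d hd => ?_
  have hdeg : ∑ i ∈ d.support, d i = n := by
    simpa [Finsupp.weight, Finsupp.linearCombination, Finsupp.sum] using
      hφ (mem_support_iff.mp hd)
  simp only [Pi.smul_apply, smul_eq_mul, mul_pow, Finset.prod_mul_distrib,
    Finset.prod_pow_eq_pow_sum, hdeg]
  ring

namespace Submodule

variable {K V : Type*} [DivisionRing K] [AddCommGroup V] [Module K V]

theorem exists_mem_notMem_span_singleton {W : Submodule K V} (hW : 1 < Module.finrank K W)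
    (e : V) : ∃ w ∈ W, w ∉ K ∙ e := by
  by_contra! h
  have := (finrank_mono h).trans (finrank_span_le_card ({e} : Set V))
  rw [Set.toFinset_singleton, Finset.card_singleton] at this
  omega

theorem eq_span_pair_of_finrank_eq_two {W : Submodule K V} (hW : Module.finrank K W = 2)
    {e u : V} (he : e ∈ W) (he0 : e ≠ 0) (hu : u ∈ W) (hue : u ∉ K ∙ e) :
    W = span K {e, u} := by
  have hind : LinearIndependent K ![e, u] :=
    (LinearIndependent.pair_iff' he0).mpr fun a h => hue (mem_span_singleton.mpr ⟨a, h⟩)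
  have : FiniteDimensional K W := Module.finite_of_finrank_eq_succ hW
  refine (eq_of_le_of_finrank_le ?_ ?_).symm
  · simpa [span_le, Set.insert_subset_iff] using ⟨he, hu⟩
  · rw [hW, ← Matrix.range_cons_cons_empty e u ![], finrank_span_eq_card hind, Fintype.card_fin]

end Submodule

theorem eval_f0Poly (F : MvPolynomial (Fin 4) ℂ) (v : Fin 6 → ℂ) :
    eval v (f0Poly F) = v 4 ^ 3 - eval ![v 0, v 1, v 2, v 3] F
      + v 5 * (v 0 * v 3 - v 1 * v 2) := by
  have hc : v ∘ Fin.castLE (by norm_num) = ![v 0, v 1, v 2, v 3] := by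
    funext i; fin_cases i <;> rfl
  simp [f0Poly, eval_rename, hc]

theorem eval_f0Poly_smul_e5_add_smul {F : MvPolynomial (Fin 4) ℂ} (hF : F.IsHomogeneous 3)
    (a b : ℂ) {u : Fin 6 → ℂ} (hu5 : u 5 = 0) :
    eval (a • e5 + b • u) (f0Poly F) = b ^ 3 * (u 4 ^ 3 - eval ![u 0, u 1, u 2, u 3] F)
      + a * b ^ 2 * (u 0 * u 3 - u 1 * u 2) := by
  have hsmul : ![b * u 0, b * u 1, b * u 2, b * u 3] = b • ![u 0, u 1, u 2, u 3] := by
    funext i; fin_cases i <;> simp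
  simp only [eval_f0Poly, Pi.add_apply, Pi.smul_apply, smul_eq_mul, e5, Matrix.cons_val,
    mul_zero, zero_add, hu5, mul_one, add_zero]
  rw [hsmul, hF.eval_smul]
  ring

/-- The lines on `Y_{F,0}` through the cusp point `p₀` are exactly the lines joining
`p₀` to a point of the K3 surface `S ⊂ ℙ⁴` defined by `x₄³ = F` and `x₀x₃ = x₁x₂`. -/
theorem stmt2 (F : MvPolynomial (Fin 4) ℂ) (hF : F.IsHomogeneous 3)
    (W : Submodule ℂ (Fin 6 → ℂ)) (hWdim : Module.finrank ℂ ↥W = 2) (he5 : e5 ∈ W) :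
    (∀ v ∈ W, eval v (f0Poly F) = 0) ↔
      ∃ u : Fin 6 → ℂ, u ∈ W ∧ u ≠ 0 ∧ u 5 = 0 ∧ u 0 * u 3 = u 1 * u 2 ∧
        u 4 ^ 3 = eval ![u 0, u 1, u 2, u 3] F ∧
        W = Submodule.span ℂ {e5, u} := by
  have he5_ne : e5 ≠ 0 := fun h => by simpa [e5] using congrFun h 5
  constructor
  · intro hvan
    obtain ⟨w, hwW, hwe⟩ := W.exists_mem_notMem_span_singleton (by omega) e5
    set u := w - w 5 • e5
    have hu5 : u 5 = 0 := by simp [u, show e5 5 = 1 from rfl]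
    have huW : u ∈ W := W.sub_mem hwW (W.smul_mem _ he5)
    have hue : u ∉ ℂ ∙ e5 := fun h => hwe <| by
      simpa [u] using add_mem h (Submodule.smul_mem _ (w 5) (Submodule.mem_span_singleton_self _))
    have hline (a b : ℂ) := hvan _ (W.add_mem (W.smul_mem a he5) (W.smul_mem b huW))
    have h01 := hline 0 1
    have h11 := hline 1 1
    rw [eval_f0Poly_smul_e5_add_smul hF _ _ hu5] at h01 h11
    refine ⟨u, huW, fun h => hue (h ▸ zero_mem _), hu5, ?_, ?_,
      W.eq_span_pair_of_finrank_eq_two hWdim he5 he5_ne huW hue⟩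
    · linear_combination h11 - h01
    · linear_combination h01
  · rintro ⟨u, -, -, hu5, hquad, hcub, rfl⟩ v hv
    obtain ⟨a, b, rfl⟩ := Submodule.mem_span_pair.mp hv
    rw [eval_f0Poly_smul_e5_add_smul hF a b hu5, hquad, hcub]
    ring
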